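/- arXiv:2207.05555 — 2 statements merged into one kernel-verified Lean document; each statement's English description precedes it below -/
import Mathlib

section
/- Let G be a simple graph, let F be a set of vertices of G, and let P be a map from the vertex set of G to F satisfying: (P2) P(v) = v for every v ∈ F; (P3) for every edge {v,w} of G, either P(v) = P(w) or {P(v),P(w)} is an edge of G; (P4) if {v,w} is an edge of G with v ∈ F and w ∉ F, then P(v) = P(w). Then every geodesic (path of minimal length) in G between two vertices of F has all of its vertices in F. -/
private lemma project_walk {V : Type*} {G : SimpleGraph V} {P : V → V}
    (hP3 : ∀ v w : V, G.Adj v w → P v = P w ∨ G.Adj (P v) (P w)) :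
    ∀ {a b : V} (p : G.Walk a b), ∃ q : G.Walk (P a) (P b), q.length ≤ p.length := by
  intro a b p
  induction p with
  | nil => exact ⟨SimpleGraph.Walk.nil, le_refl _⟩
  | cons h p ih =>
    obtain ⟨q, hq⟩ := ih
    rcases hP3 _ _ h with he | ha
    · exact ⟨q.copy he.symm rfl, by simpa using hq.trans (Nat.le_succ _)⟩
    · exact ⟨SimpleGraph.Walk.cons ha q, by simpa using Nat.succ_le_succ hq⟩

private lemma project_walk_lt {V : Type*} {G : SimpleGraph V} {F : Set V} {P : V → V}
    (hP3 : ∀ v w : V, G.Adj v w → P v = P w ∨ G.Adj (P v) (P w))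
    (hP4 : ∀ v w : V, G.Adj v w → v ∈ F → w ∉ F → P v = P w) :
    ∀ {a b : V} (p : G.Walk a b), a ∈ F → (∃ x ∈ p.support, x ∉ F) →
      ∃ q : G.Walk (P a) (P b), q.length < p.length := by
  intro a b p
  induction p with
  | nil =>
    intro ha ⟨x, hx, hxF⟩
    simp only [SimpleGraph.Walk.support_nil, List.mem_singleton] at hx
    exact absurd (hx ▸ ha) hxF
  | @cons a c b h p ih =>
    intro ha ⟨x, hx, hxF⟩
    by_cases hc : c ∈ F
    · have hx' : x ∈ p.support := by
        simp only [SimpleGraph.Walk.support_cons, List.mem_cons] at hx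
        rcases hx with rfl | hx
        · exact absurd ha hxF
        · exact hx
      obtain ⟨q, hq⟩ := ih hc ⟨x, hx', hxF⟩
      rcases hP3 _ _ h with he | hadj
      · exact ⟨q.copy he.symm rfl, by simpa using Nat.lt_succ_of_lt hq⟩
      · exact ⟨SimpleGraph.Walk.cons hadj q, by simpa using Nat.succ_lt_succ hq⟩
    · have he := hP4 _ _ h ha hc
      obtain ⟨q, hq⟩ := project_walk hP3 p
      exact ⟨q.copy he.symm rfl, by simpa using Nat.lt_succ_of_le hq⟩

/-- Let `G` be a simple graph, `F` a set of vertices, and `P` a map from the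
vertex set of `G` to `F` satisfying (P2), (P3), (P4).  Then every geodesic (path of minimal
length) in `G` between two vertices of `F` has all of its vertices in `F`. -/
theorem geodesic_stays_in_face {V : Type*} (G : SimpleGraph V) (F : Set V) (P : V → V)
    (hP1 : ∀ v : V, P v ∈ F)
    (hP2 : ∀ v ∈ F, P v = v)
    (hP3 : ∀ v w : V, G.Adj v w → P v = P w ∨ G.Adj (P v) (P w))
    (hP4 : ∀ v w : V, G.Adj v w → v ∈ F → w ∉ F → P v = P w)
    (u v : V) (hu : u ∈ F) (hv : v ∈ F)
    (p : G.Walk u v) (hp : p.IsPath)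
    (hmin : ∀ q : G.Walk u v, q.IsPath → p.length ≤ q.length) :
    ∀ x ∈ p.support, x ∈ F := by
  classical
  intro x hx
  by_contra hxF
  obtain ⟨q, hq⟩ := project_walk_lt hP3 hP4 p hu ⟨x, hx, hxF⟩
  let q' : G.Walk u v := q.copy (hP2 u hu) (hP2 v hv)
  have h1 : p.length ≤ q'.bypass.length := hmin q'.bypass q'.bypass_isPath
  have h2 : q'.bypass.length ≤ q'.length := SimpleGraph.Walk.length_bypass_le q'
  have h3 : q'.length = q.length := SimpleGraph.Walk.length_copy _ _ _
  omega
end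

section
/- Let (V,R) be an abstract exchange structure and G its exchange graph. If for every face F of G there exists a projection P : G → F, then G has the non-leaving-face property: every geodesic connecting two vertices of G lies in the minimal face containing both. -/
/-- A set of pairwise compatible elements for the relation `R`. -/
def PairwiseCompatible {V : Type*} (R : V → V → Prop) (S : Set V) : Prop :=
  ∀ ⦃x⦄, x ∈ S → ∀ ⦃y⦄, y ∈ S → R x y

/-- A cluster is a maximal set of pairwise compatible elements. -/
def IsCluster {V : Type*} (R : V → V → Prop) (S : Set V) : Prop :=
  PairwiseCompatible R S ∧ ∀ T : Set V, PairwiseCompatible R T → S ⊆ T → T = S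

/-- The exchange graph of `(V, R)`: vertices are the clusters, two clusters being adjacent
iff their intersection has cardinality `n - 1` (distinct clusters). -/
def exchangeGraph {V : Type*} (R : V → V → Prop) (n : ℕ) :
    SimpleGraph {S : Set V // IsCluster R S} where
  Adj C D := C ≠ D ∧ ((C : Set V) ∩ (D : Set V)).ncard = n - 1
  symm := by
    constructor
    rintro C D ⟨h1, h2⟩
    exact ⟨h1.symm, by rwa [Set.inter_comm]⟩
  loopless := by constructor; rintro C ⟨h1, _⟩; exact h1 rfl


section Aux
variable {α : Type*} {G : SimpleGraph α} {f : α → α}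

lemma mapWalk_le (hf : ∀ a b, G.Adj a b → f a = f b ∨ G.Adj (f a) (f b)) :
    ∀ {v w : α} (p : G.Walk v w), ∃ q : G.Walk (f v) (f w), q.length ≤ p.length := by
  intro v w p
  induction p with
  | nil => exact ⟨SimpleGraph.Walk.nil, le_rfl⟩
  | cons h p ih =>
    obtain ⟨q, hq⟩ := ih
    rcases hf _ _ h with he | ha
    · exact ⟨q.copy he.symm rfl, by simpa using hq.trans (Nat.le_succ _)⟩
    · exact ⟨SimpleGraph.Walk.cons ha q, by simpa using Nat.succ_le_succ hq⟩

lemma mapWalk_lt (hf : ∀ a b, G.Adj a b → f a = f b ∨ G.Adj (f a) (f b))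
    (Upred : α → Prop)
    (hc : ∀ a b, G.Adj a b → Upred a → ¬ Upred b → f a = f b) :
    ∀ {v w : α} (p : G.Walk v w), Upred v → (∃ C ∈ p.support, ¬ Upred C) →
      ∃ q : G.Walk (f v) (f w), q.length < p.length := by
  intro v w p
  induction p with
  | nil =>
    intro hv ⟨C, hC, hnC⟩
    simp at hC; subst hC; exact absurd hv hnC
  | @cons v x w h p ih =>
    intro hv hbad
    by_cases hx : Upred x
    · have hbad' : ∃ C ∈ p.support, ¬ Upred C := by
        obtain ⟨C, hC, hnC⟩ := hbad
        rcases (by simpa using hC : C = v ∨ C ∈ p.support) with rfl | hC'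
        · exact absurd hv hnC
        · exact ⟨C, hC', hnC⟩
      obtain ⟨q, hq⟩ := ih hx hbad'
      rcases hf _ _ h with he | ha
      · exact ⟨q.copy he.symm rfl, by simpa using Nat.lt_succ_of_lt hq⟩
      · exact ⟨SimpleGraph.Walk.cons ha q, by simpa using Nat.succ_lt_succ hq⟩
    · have he : f v = f x := hc _ _ h hv hx
      obtain ⟨q, hq⟩ := mapWalk_le hf p
      exact ⟨q.copy he.symm rfl, by simpa using Nat.lt_succ_of_le hq⟩

end Aux

/-- If for every face of the exchange graph of an abstract exchange
structure there exists a projection onto that face, then the exchange graph has the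
non-leaving-face property: every geodesic connecting two vertices lies in the minimal face
containing both (i.e. all its vertices are clusters containing the intersection of the two
endpoint clusters). -/
theorem exchangeGraph_nonLeavingFace {V : Type*} (R : V → V → Prop) (n : ℕ)
    (hne : Nonempty V)
    (hrefl : ∀ x, R x x) (hsymm : ∀ x y, R x y → R y x)
    (hclusters : ∀ S : Set V, IsCluster R S → S.Finite ∧ S.ncard = n)
    (htwo : ∀ S : Set V, PairwiseCompatible R S → S.Finite → S.ncard = n - 1 →
      ∃ C₁ C₂ : Set V, C₁ ≠ C₂ ∧ IsCluster R C₁ ∧ IsCluster R C₂ ∧ S ⊆ C₁ ∧ S ⊆ C₂ ∧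
        ∀ C : Set V, IsCluster R C → S ⊆ C → C = C₁ ∨ C = C₂)
    (hproj : ∀ U : Set V, PairwiseCompatible R U →
      (∃ C : Set V, IsCluster R C ∧ U ⊆ C) →
      ∃ P : {S : Set V // IsCluster R S} → {S : Set V // IsCluster R S},
        (∀ C : {S : Set V // IsCluster R S}, U ⊆ (P C : Set V)) ∧
        (∀ C : {S : Set V // IsCluster R S}, U ⊆ (C : Set V) → P C = C) ∧
        (∀ C D, (exchangeGraph R n).Adj C D →
          P C = P D ∨ (exchangeGraph R n).Adj (P C) (P D)) ∧
        (∀ C D, (exchangeGraph R n).Adj C D → U ⊆ (C : Set V) → ¬ U ⊆ (D : Set V) →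
          P C = P D)) :
    ∀ (v w : {S : Set V // IsCluster R S}) (p : (exchangeGraph R n).Walk v w),
      p.IsPath → (∀ q : (exchangeGraph R n).Walk v w, q.IsPath → p.length ≤ q.length) →
      ∀ C ∈ p.support, (v : Set V) ∩ (w : Set V) ⊆ (C : Set V) := by

  classical
  intro v w p hp hmin C hC
  by_contra hnC
  set U : Set V := (v : Set V) ∩ (w : Set V) with hU
  have hUv : U ⊆ (v : Set V) := Set.inter_subset_left
  have hUw : U ⊆ (w : Set V) := Set.inter_subset_right
  have hUpc : PairwiseCompatible R U := fun x hx y hy => v.2.1 (hUv hx) (hUv hy)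
  obtain ⟨P, h1, h2, h3, h4⟩ := hproj U hUpc ⟨(v : Set V), v.2, hUv⟩
  have hcoll : ∀ a b, (exchangeGraph R n).Adj a b → U ⊆ (a : Set V) → ¬ U ⊆ (b : Set V) →
      P a = P b := h4
  obtain ⟨q, hq⟩ := mapWalk_lt h3 (fun C => U ⊆ (C : Set V)) hcoll p hUv ⟨C, hC, hnC⟩
  have hPv : P v = v := h2 v hUv
  have hPw : P w = w := h2 w hUw
  let q' : (exchangeGraph R n).Walk v w := q.copy hPv hPw
  have hq' : q'.length < p.length := by
    simpa [q', SimpleGraph.Walk.length_copy] using hq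
  have := hmin q'.bypass q'.bypass_isPath
  have hle := SimpleGraph.Walk.length_bypass_le q'
  omega
end
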